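/- For ξ₃ ∈ ℝ with ξ₃ ∉ {-1, 0, 1}, the Hessian of λ^±(ξ) = (√(|ξ|²+2ξ₃+1) ± √(|ξ|²-2ξ₃+1))/2 at the point (0,0,ξ₃) equals (1/2)(1/|ξ₃+1| ± 1/|ξ₃-1|) · diag(1,1,0). -/

import Mathlib

noncomputable def pd (f : (Fin 3 → ℝ) → ℝ) (x : Fin 3 → ℝ) (k : Fin 3) : ℝ :=
  fderiv ℝ f x (Pi.single k 1)

noncomputable def hess (f : (Fin 3 → ℝ) → ℝ) (x : Fin 3 → ℝ) : Matrix (Fin 3) (Fin 3) ℝ :=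
  Matrix.of fun k l => pd (fun y => pd f y l) x k

noncomputable def lamP (ξ : Fin 3 → ℝ) : ℝ :=
  (Real.sqrt (ξ 0 ^ 2 + ξ 1 ^ 2 + ξ 2 ^ 2 + 2 * ξ 2 + 1) +
    Real.sqrt (ξ 0 ^ 2 + ξ 1 ^ 2 + ξ 2 ^ 2 - 2 * ξ 2 + 1)) / 2

noncomputable def lamM (ξ : Fin 3 → ℝ) : ℝ :=
  (Real.sqrt (ξ 0 ^ 2 + ξ 1 ^ 2 + ξ 2 ^ 2 + 2 * ξ 2 + 1) -
    Real.sqrt (ξ 0 ^ 2 + ξ 1 ^ 2 + ξ 2 ^ 2 - 2 * ξ 2 + 1)) / 2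

noncomputable def qq (c : ℝ) (y : Fin 3 → ℝ) : ℝ := y 0 ^ 2 + y 1 ^ 2 + (y 2 + c) ^ 2

noncomputable def qL (c : ℝ) (y : Fin 3 → ℝ) : (Fin 3 → ℝ) →L[ℝ] ℝ :=
  (2 * y 0) • ContinuousLinearMap.proj 0 + (2 * y 1) • ContinuousLinearMap.proj 1 +
    (2 * (y 2 + c)) • ContinuousLinearMap.proj 2

lemma hasq (c : ℝ) (y : Fin 3 → ℝ) : HasFDerivAt (qq c) (qL c y) y := by
  have pp : ∀ i : Fin 3, HasFDerivAt (fun z : Fin 3 → ℝ => z i)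
      (ContinuousLinearMap.proj i : (Fin 3 → ℝ) →L[ℝ] ℝ) y := fun i =>
    (ContinuousLinearMap.proj (R := ℝ) (φ := fun _ : Fin 3 => ℝ) i).hasFDerivAt
  have p0 := pp 0
  have p1 := pp 1
  have p2 := (pp 2).add_const c
  have h := ((p0.mul p0).add (p1.mul p1)).add (p2.mul p2)
  have hfun : qq c = fun z : Fin 3 → ℝ => z 0 * z 0 + z 1 * z 1 + (z 2 + c) * (z 2 + c) := by
    funext z; simp only [qq]; ring
  rw [hfun]
  refine h.congr_fderiv ?_
  refine ContinuousLinearMap.ext fun v => ?_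
  simp [qL, ContinuousLinearMap.add_apply, ContinuousLinearMap.smul_apply, smul_eq_mul]
  ring

noncomputable def gd (c : ℝ) (y : Fin 3 → ℝ) : (Fin 3 → ℝ) →L[ℝ] ℝ :=
  (1 / (2 * Real.sqrt (qq c y))) • qL c y

lemma hasg {c : ℝ} {y : Fin 3 → ℝ} (h : qq c y ≠ 0) :
    HasFDerivAt (fun z => Real.sqrt (qq c z)) (gd c y) y := by
  have := (Real.hasDerivAt_sqrt h).comp_hasFDerivAt y (hasq c y)
  simpa [Function.comp_def, gd] using this

noncomputable def P (c : ℝ) (l : Fin 3) (y : Fin 3 → ℝ) : ℝ :=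
  (y l + c * (if l = 2 then 1 else 0)) / Real.sqrt (qq c y)

lemma qq_pos {c : ℝ} {y : Fin 3 → ℝ} (h : qq c y ≠ 0) : 0 < qq c y :=
  lt_of_le_of_ne (by unfold qq; positivity) (Ne.symm h)

lemma sqrt_qq_ne {c : ℝ} {y : Fin 3 → ℝ} (h : qq c y ≠ 0) : Real.sqrt (qq c y) ≠ 0 :=
  ne_of_gt (Real.sqrt_pos.mpr (qq_pos h))

lemma gd_apply {c : ℝ} {y : Fin 3 → ℝ} (h : qq c y ≠ 0) (l : Fin 3) :
    gd c y (Pi.single l 1) = P c l y := by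
  have hs := sqrt_qq_ne h
  fin_cases l <;>
    simp [gd, qL, P, Pi.single_apply] <;>
    field_simp <;> ring

lemma pd_g {c : ℝ} {y : Fin 3 → ℝ} (h : qq c y ≠ 0) (l : Fin 3) :
    pd (fun z => Real.sqrt (qq c z)) y l = P c l y := by
  rw [pd, (hasg h).fderiv, gd_apply h]

lemma hasP {c : ℝ} {y : Fin 3 → ℝ} (h : qq c y ≠ 0) (l : Fin 3) :
    HasFDerivAt (P c l)
      ((y l + c * (if l = 2 then 1 else 0)) •
          ((-(Real.sqrt (qq c y) ^ 2)⁻¹) • gd c y) +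
        (Real.sqrt (qq c y))⁻¹ • (ContinuousLinearMap.proj l : (Fin 3 → ℝ) →L[ℝ] ℝ)) y := by
  have hs := sqrt_qq_ne h
  have pp : HasFDerivAt (fun z : Fin 3 → ℝ => z l)
      (ContinuousLinearMap.proj l : (Fin 3 → ℝ) →L[ℝ] ℝ) y :=
    (ContinuousLinearMap.proj (R := ℝ) (φ := fun _ : Fin 3 => ℝ) l).hasFDerivAt
  have hu := pp.add_const (c * (if l = 2 then 1 else 0))
  have hv : HasFDerivAt (fun z : Fin 3 → ℝ => (Real.sqrt (qq c z))⁻¹)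
      ((-(Real.sqrt (qq c y) ^ 2)⁻¹) • gd c y) y :=
    (hasDerivAt_inv hs).comp_hasFDerivAt y (hasg h)
  have := hu.mul hv
  have hfun : P c l = fun z : Fin 3 → ℝ =>
      (z l + c * (if l = 2 then 1 else 0)) * (Real.sqrt (qq c z))⁻¹ := by
    funext z; simp [P, div_eq_mul_inv]
  rw [hfun]
  exact this

lemma pd_P {c : ℝ} {y : Fin 3 → ℝ} (h : qq c y ≠ 0) (l k : Fin 3) :
    pd (P c l) y k =
      ((if l = k then 1 else 0) - P c l y * P c k y) / Real.sqrt (qq c y) := by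
  have hs := sqrt_qq_ne h
  have hsq : Real.sqrt (qq c y) ^ 2 = qq c y := Real.sq_sqrt (le_of_lt (qq_pos h))
  rw [pd, (hasP h l).fderiv]
  have happ : (ContinuousLinearMap.proj l : (Fin 3 → ℝ) →L[ℝ] ℝ) (Pi.single k 1)
      = (if l = k then 1 else 0) := by
    simp [Pi.single_apply]
  simp only [ContinuousLinearMap.add_apply, ContinuousLinearMap.smul_apply, smul_eq_mul,
    gd_apply h, happ]
  have hPl : P c l y = (y l + c * (if l = 2 then 1 else 0)) / Real.sqrt (qq c y) := rfl
  rw [hPl]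
  set s := Real.sqrt (qq c y) with hsdef
  field_simp
  by_cases hlk : l = k <;> simp [hlk] <;> ring

noncomputable def F (ε : ℝ) (y : Fin 3 → ℝ) : ℝ :=
  (Real.sqrt (qq 1 y) + ε * Real.sqrt (qq (-1) y)) / 2

lemma pd_F {ε : ℝ} {y : Fin 3 → ℝ} (h1 : qq 1 y ≠ 0) (h2 : qq (-1) y ≠ 0) (l : Fin 3) :
    pd (F ε) y l = (P 1 l y + ε * P (-1) l y) / 2 := by
  have hF := ((hasg h1).add ((hasg h2).const_mul ε)).const_mul (1/2 : ℝ)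
  have hFe : F ε = fun z => (1/2 : ℝ) * (Real.sqrt (qq 1 z) + ε * Real.sqrt (qq (-1) z)) := by
    funext z; simp only [F]; ring
  rw [pd, hFe, (show HasFDerivAt (fun z => (1/2 : ℝ) * (Real.sqrt (qq 1 z) + ε * Real.sqrt (qq (-1) z))) _ y from hF).fderiv]
  simp only [ContinuousLinearMap.add_apply, ContinuousLinearMap.smul_apply,
    ContinuousLinearMap.coe_smul', Pi.smul_apply, smul_eq_mul, gd_apply h1, gd_apply h2]
  ring

lemma qq_cont (c : ℝ) : Continuous (qq c) := by
  unfold qq; fun_prop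

lemma pd_pd_F {ε : ℝ} {x : Fin 3 → ℝ} (h1 : qq 1 x ≠ 0) (h2 : qq (-1) x ≠ 0) (k l : Fin 3) :
    pd (fun y => pd (F ε) y l) x k =
      (((if l = k then 1 else 0) - P 1 l x * P 1 k x) / Real.sqrt (qq 1 x)
        + ε * (((if l = k then 1 else 0) - P (-1) l x * P (-1) k x) / Real.sqrt (qq (-1) x))) / 2 := by
  have hev : (fun y => pd (F ε) y l) =ᶠ[nhds x] (fun y => (P 1 l y + ε * P (-1) l y) / 2) := by
    filter_upwards [((qq_cont 1).continuousAt).eventually_ne h1,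
      ((qq_cont (-1)).continuousAt).eventually_ne h2] with y hy1 hy2
    exact pd_F hy1 hy2 l
  have hsum := ((hasP h1 l).add ((hasP h2 l).const_mul ε)).const_mul (1/2 : ℝ)
  have he2 : (fun y => (P 1 l y + ε * P (-1) l y) / 2) =
      fun y => (1/2 : ℝ) * (P 1 l y + ε * P (-1) l y) := by
    funext z; ring
  rw [pd, hev.fderiv_eq, he2, (show HasFDerivAt (fun y => (1/2 : ℝ) * (P 1 l y + ε * P (-1) l y)) _ x from hsum).fderiv]
  have e1 : ∀ c : ℝ, ∀ hc : qq c x ≠ 0,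
      ((x l + c * (if l = 2 then 1 else 0)) •
          ((-(Real.sqrt (qq c x) ^ 2)⁻¹) • gd c x) +
        (Real.sqrt (qq c x))⁻¹ • (ContinuousLinearMap.proj l : (Fin 3 → ℝ) →L[ℝ] ℝ))
        (Pi.single k 1)
      = ((if l = k then 1 else 0) - P c l x * P c k x) / Real.sqrt (qq c x) := by
    intro c hc
    rw [← pd_P hc l k, pd, (hasP hc l).fderiv]
  simp only [ContinuousLinearMap.add_apply, ContinuousLinearMap.smul_apply,
    ContinuousLinearMap.coe_smul', Pi.smul_apply, smul_eq_mul, e1 1 h1, e1 (-1) h2]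
  ring

lemma main_eps (ξ₃ ε : ℝ) (hm : ξ₃ ≠ -1) (hp : ξ₃ ≠ 1) :
    hess (F ε) ![0, 0, ξ₃] =
      ((1 / 2) * (1 / |ξ₃ + 1| + ε * (1 / |ξ₃ - 1|))) • !![(1:ℝ), 0, 0; 0, 1, 0; 0, 0, 0] := by
  have ha : ξ₃ + 1 ≠ 0 := fun h => hm (by linarith)
  have hb : ξ₃ - 1 ≠ 0 := fun h => hp (by linarith)
  have hx0 : (![0, 0, ξ₃] : Fin 3 → ℝ) 0 = 0 := rfl
  have hx1 : (![0, 0, ξ₃] : Fin 3 → ℝ) 1 = 0 := rfl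
  have hx2 : (![0, 0, ξ₃] : Fin 3 → ℝ) 2 = ξ₃ := rfl
  have hqq1 : qq 1 ![0, 0, ξ₃] = (ξ₃ + 1) ^ 2 := by
    simp only [qq, hx0, hx1, hx2]; ring
  have hqq2 : qq (-1) ![0, 0, ξ₃] = (ξ₃ - 1) ^ 2 := by
    simp only [qq, hx0, hx1, hx2]; ring
  have h1 : qq 1 ![0, 0, ξ₃] ≠ 0 := by rw [hqq1]; exact pow_ne_zero 2 ha
  have h2 : qq (-1) ![0, 0, ξ₃] ≠ 0 := by rw [hqq2]; exact pow_ne_zero 2 hb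
  have s1 : Real.sqrt (qq 1 ![0, 0, ξ₃]) = |ξ₃ + 1| := by
    rw [hqq1, Real.sqrt_sq_eq_abs]
  have s2 : Real.sqrt (qq (-1) ![0, 0, ξ₃]) = |ξ₃ - 1| := by
    rw [hqq2, Real.sqrt_sq_eq_abs]
  have p10 : P 1 0 ![0, 0, ξ₃] = 0 := by simp [P, hx0]
  have p11 : P 1 1 ![0, 0, ξ₃] = 0 := by simp [P, hx1]
  have pm0 : P (-1) 0 ![0, 0, ξ₃] = 0 := by simp [P, hx0]
  have pm1 : P (-1) 1 ![0, 0, ξ₃] = 0 := by simp [P, hx1]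
  have p12 : P 1 2 ![0, 0, ξ₃] = (ξ₃ + 1) / |ξ₃ + 1| := by
    simp [P, hx2, s1]
  have pm2 : P (-1) 2 ![0, 0, ξ₃] = (ξ₃ - 1) / |ξ₃ - 1| := by
    rw [show P (-1) 2 ![0, 0, ξ₃] =
      ((![0, 0, ξ₃] : Fin 3 → ℝ) 2 + (-1) * 1) / Real.sqrt (qq (-1) ![0, 0, ξ₃]) from by
        simp [P]]
    rw [hx2, s2]; ring_nf
  have t1 : ((ξ₃ + 1) / |ξ₃ + 1|) * ((ξ₃ + 1) / |ξ₃ + 1|) = 1 := by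
    rw [div_mul_div_comm, abs_mul_abs_self]
    exact div_self (mul_ne_zero ha ha)
  have t2 : ((ξ₃ - 1) / |ξ₃ - 1|) * ((ξ₃ - 1) / |ξ₃ - 1|) = 1 := by
    rw [div_mul_div_comm, abs_mul_abs_self]
    exact div_self (mul_ne_zero hb hb)
  have m00 : (!![(1:ℝ), 0, 0; 0, 1, 0; 0, 0, 0]) 0 0 = 1 := rfl
  have m01 : (!![(1:ℝ), 0, 0; 0, 1, 0; 0, 0, 0]) 0 1 = 0 := rfl
  have m02 : (!![(1:ℝ), 0, 0; 0, 1, 0; 0, 0, 0]) 0 2 = 0 := rfl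
  have m10 : (!![(1:ℝ), 0, 0; 0, 1, 0; 0, 0, 0]) 1 0 = 0 := rfl
  have m11 : (!![(1:ℝ), 0, 0; 0, 1, 0; 0, 0, 0]) 1 1 = 1 := rfl
  have m12 : (!![(1:ℝ), 0, 0; 0, 1, 0; 0, 0, 0]) 1 2 = 0 := rfl
  have m20 : (!![(1:ℝ), 0, 0; 0, 1, 0; 0, 0, 0]) 2 0 = 0 := rfl
  have m21 : (!![(1:ℝ), 0, 0; 0, 1, 0; 0, 0, 0]) 2 1 = 0 := rfl
  have m22 : (!![(1:ℝ), 0, 0; 0, 1, 0; 0, 0, 0]) 2 2 = 0 := rfl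
  ext k l
  show pd (fun y => pd (F ε) y l) ![0, 0, ξ₃] k = _
  rw [pd_pd_F h1 h2 k l]
  fin_cases k <;> fin_cases l <;>
    simp [s1, s2, p10, p11, p12, pm0, pm1, pm2, t1, t2,
      m00, m01, m02, m10, m11, m12, m20, m21, m22, Matrix.smul_apply] <;>
    ring


lemma lamP_eq : lamP = F 1 := by
  funext y
  have a1 : y 0 ^ 2 + y 1 ^ 2 + y 2 ^ 2 + 2 * y 2 + 1 = y 0 ^ 2 + y 1 ^ 2 + (y 2 + 1) ^ 2 := by
    ring
  have a2 : y 0 ^ 2 + y 1 ^ 2 + y 2 ^ 2 - 2 * y 2 + 1 =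
      y 0 ^ 2 + y 1 ^ 2 + (y 2 + (-1)) ^ 2 := by ring
  simp only [lamP, F, qq, a1, a2]
  ring

lemma lamM_eq : lamM = F (-1) := by
  funext y
  have a1 : y 0 ^ 2 + y 1 ^ 2 + y 2 ^ 2 + 2 * y 2 + 1 = y 0 ^ 2 + y 1 ^ 2 + (y 2 + 1) ^ 2 := by
    ring
  have a2 : y 0 ^ 2 + y 1 ^ 2 + y 2 ^ 2 - 2 * y 2 + 1 =
      y 0 ^ 2 + y 1 ^ 2 + (y 2 + (-1)) ^ 2 := by ring
  simp only [lamM, F, qq, a1, a2]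
  ring

theorem hess_lam_on_axis (ξ₃ : ℝ) (hm : ξ₃ ≠ -1) (h0 : ξ₃ ≠ 0) (hp : ξ₃ ≠ 1) :
    hess lamP ![0, 0, ξ₃] =
      ((1 / 2) * (1 / |ξ₃ + 1| + 1 / |ξ₃ - 1|)) • !![1, 0, 0; 0, 1, 0; 0, 0, 0] ∧
    hess lamM ![0, 0, ξ₃] =
      ((1 / 2) * (1 / |ξ₃ + 1| - 1 / |ξ₃ - 1|)) • !![1, 0, 0; 0, 1, 0; 0, 0, 0] := by
  constructor
  · rw [lamP_eq, main_eps ξ₃ 1 hm hp]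
    congr 1
    ring
  · rw [lamM_eq, main_eps ξ₃ (-1) hm hp]
    congr 1
    ring
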